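/- Let S be a continuous finitely generated free semigroup action on a compact metric space X. If K ⊆ X is a countable closed subset with a unique limit point x₀, then h_top(x₀) ≥ h_top(K, S), where h_top(x₀) is the entropy function of S at x₀. -/

import Mathlib

open Set Filter Topology

noncomputable section

variable {X Y : Type*} [MetricSpace X] [MetricSpace Y]

/-- The Bowen/dynamical metric along a word, given as the list of maps to be applied
(in order of application). -/
def dynDist : List (X → X) → X → X → ℝ
  | [], x, y => dist x y
  | f :: w, x, y => max (dist x y) (dynDist w (f x) (f y))

/-- A set `E` is `(w, ε)`-separated if distinct points of `E` are at `dynDist w`-distance `> ε`. -/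
def IsDynSeparated (w : List (X → X)) (ε : ℝ) (E : Set X) : Prop :=
  E.Pairwise fun x y => ε < dynDist w x y

/-- A set `F` is `(w, ε)`-spanning for `K` if every point of `K` is at
`dynDist w`-distance `< ε` of a point of `F`. -/
def IsDynSpanning (w : List (X → X)) (ε : ℝ) (K F : Set X) : Prop :=
  ∀ x ∈ K, ∃ y ∈ F, dynDist w x y < ε

/-- `s(K, w, ε)`: maximal cardinality of a `(w, ε)`-separated subset of `K`. -/
def sepCard (K : Set X) (w : List (X → X)) (ε : ℝ) : ℕ :=
  sSup {n | ∃ E : Finset X, ↑E ⊆ K ∧ IsDynSeparated w ε (↑E : Set X) ∧ E.card = n}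

/-- `b(K, w, ε)`: minimal cardinality of a `(w, ε)`-spanning subset of `K`. -/
def spanCard (K : Set X) (w : List (X → X)) (ε : ℝ) : ℕ :=
  sInf {n | ∃ F : Finset X, ↑F ⊆ K ∧ IsDynSpanning w ε K (↑F : Set X) ∧ F.card = n}

variable {p : ℕ}

/-- `S_n(K, 𝕊, ε)`: averaged count of maximal separated sets over all words of length `n`. -/
def SepSum (g : Fin p → X → X) (K : Set X) (n : ℕ) (ε : ℝ) : ℝ :=
  (1 / (p : ℝ) ^ n) * ∑ u : Fin n → Fin p, (sepCard K ((List.ofFn u).map g) ε : ℝ)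

/-- Averaged count of minimal spanning sets over all words of length `n`. -/
def SpanSum (g : Fin p → X → X) (K : Set X) (n : ℕ) (ε : ℝ) : ℝ :=
  (1 / (p : ℝ) ^ n) * ∑ u : Fin n → Fin p, (spanCard K ((List.ofFn u).map g) ε : ℝ)

/-- `S_d(K, 𝕊, ε)`: exponential growth rate of `SepSum`. -/
def SepRate (g : Fin p → X → X) (K : Set X) (ε : ℝ) : EReal :=
  Filter.limsup (fun n : ℕ => ((Real.log (SepSum g K n ε) / n : ℝ) : EReal)) Filter.atTop

/-- `B_d(K, 𝕊, ε)`: exponential growth rate of `SpanSum`. -/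
def SpanRate (g : Fin p → X → X) (K : Set X) (ε : ℝ) : EReal :=
  Filter.limsup (fun n : ℕ => ((Real.log (SpanSum g K n ε) / n : ℝ) : EReal)) Filter.atTop

/-- Bufetov topological entropy `h_top(K, 𝕊)` of the free semigroup action generated by `g`
restricted to `K`: the limit (= supremum, by monotonicity) of `SepRate` as `ε → 0⁺`. -/
def semigroupEntropy (g : Fin p → X → X) (K : Set X) : EReal :=
  ⨆ ε : {ε : ℝ // 0 < ε}, SepRate g K (ε : ℝ)

/-- `x` is an entropy point: every closed neighbourhood has positive entropy. -/
def IsEntropyPoint (g : Fin p → X → X) (x : X) : Prop :=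
  ∀ K : Set X, K ∈ nhds x → IsClosed K → 0 < semigroupEntropy g K

/-- `x` is a full entropy point: every closed neighbourhood carries full entropy. -/
def IsFullEntropyPoint (g : Fin p → X → X) (x : X) : Prop :=
  ∀ K : Set X, K ∈ nhds x → IsClosed K → semigroupEntropy g K = semigroupEntropy g Set.univ

/-- Bowen entropy growth rate of a single map `F` on `C` at scale `ε`. -/
def mapSepRate (F : Y → Y) (C : Set Y) (ε : ℝ) : EReal :=
  Filter.limsup
    (fun n : ℕ => ((Real.log (sepCard C (List.replicate n F) ε) / n : ℝ) : EReal)) Filter.atTop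

/-- Classical Bowen topological entropy of a single map `F` on a subset `C`. -/
def mapEntropy (F : Y → Y) (C : Set Y) : EReal :=
  ⨆ ε : {ε : ℝ // 0 < ε}, mapSepRate F C (ε : ℝ)

/-- Spanning growth rate of a single map. -/
def mapSpanRate (F : Y → Y) (C : Set Y) (ε : ℝ) : EReal :=
  Filter.limsup
    (fun n : ℕ => ((Real.log (spanCard C (List.replicate n F) ε) / n : ℝ) : EReal)) Filter.atTop

/-- `h_d(x, ε)` for the semigroup action: infimum of `SpanRate` over compact neighbourhoods. -/
def hdEps (g : Fin p → X → X) (x : X) (ε : ℝ) : EReal :=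
  ⨅ K : {K : Set X // K ∈ nhds x ∧ IsCompact K}, SpanRate g (K : Set X) ε

/-- The entropy function `h_top(x)` of the semigroup action. -/
def entropyFn (g : Fin p → X → X) (x : X) : EReal :=
  ⨆ ε : {ε : ℝ // 0 < ε}, hdEps g x (ε : ℝ)

/-- `h_{D}(y, ε)` for a single map. -/
def mapHdEps (F : Y → Y) (y : Y) (ε : ℝ) : EReal :=
  ⨅ C : {C : Set Y // C ∈ nhds y ∧ IsCompact C}, mapSpanRate F (C : Set Y) ε

/-- The entropy function of a single map. -/
def mapEntropyFn (F : Y → Y) (y : Y) : EReal :=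
  ⨆ ε : {ε : ℝ // 0 < ε}, mapHdEps F y (ε : ℝ)

/-- The step skew-product `F_G(ω, x) = (σω, g_{ω₀}(x))` on `(ℕ → Fin p) × X`. -/
def skewProduct (g : Fin p → X → X) : ((ℕ → Fin p) × X) → ((ℕ → Fin p) × X) :=
  fun q => (fun n => q.1 (n + 1), g (q.1 0) q.2)

/-- The cylinder `[w₁ … w_ℓ]` in `Σ_p⁺ = ℕ → Fin p`. -/
def cylinder {ℓ : ℕ} (w : Fin ℓ → Fin p) : Set (ℕ → Fin p) :=
  {ω | ∀ i : Fin ℓ, ω (i : ℕ) = w i}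

attribute [local instance] PiNat.metricSpace

lemma dynDist_self (w : List (X → X)) (x : X) : dynDist w x x = 0 := by
  induction w generalizing x with
  | nil => exact dist_self x
  | cons f w ih => simp [dynDist, ih]

lemma dynDist_comm (w : List (X → X)) (x y : X) : dynDist w x y = dynDist w y x := by
  induction w generalizing x y with
  | nil => exact dist_comm x y
  | cons f w ih => simp [dynDist, dist_comm, ih]

lemma dynDist_triangle (w : List (X → X)) (x y z : X) :
    dynDist w x z ≤ dynDist w x y + dynDist w y z := by
  induction w generalizing x y z with
  | nil => exact dist_triangle x y z
  | cons f w ih =>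
    simp only [dynDist]
    refine max_le ?_ ?_
    · exact (dist_triangle x y z).trans (add_le_add (le_max_left _ _) (le_max_left _ _))
    · exact (ih (f x) (f y) (f z)).trans (add_le_add (le_max_right _ _) (le_max_right _ _))

lemma continuous_dynDist (w : List (X → X)) (hw : ∀ f ∈ w, Continuous f) (x : X) :
    Continuous fun y => dynDist w x y := by
  induction w generalizing x with
  | nil => exact continuous_const.dist continuous_id
  | cons f w ih =>
    have hf : Continuous f := hw f List.mem_cons_self
    have htail := ih (fun g hgw => hw g (List.mem_cons_of_mem _ hgw)) (f x)
    exact (continuous_const.dist continuous_id).max (htail.comp hf)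

lemma exists_finite_spanning (w : List (X → X)) (hw : ∀ f ∈ w, Continuous f) {Z : Set X}
    (hZ : IsCompact Z) {ε : ℝ} (hε : 0 < ε) :
    ∃ F : Finset X, ↑F ⊆ Z ∧ IsDynSpanning w ε Z ↑F := by
  obtain ⟨t, hts, hcov⟩ := hZ.elim_nhds_subcover (fun x => {y | dynDist w x y < ε})
    (fun x _ => (continuous_dynDist w hw x).isOpen_preimage (Iio ε) isOpen_Iio |>.mem_nhds
      (by simpa [dynDist_self] using hε))
  refine ⟨t, hts, fun x hx => ?_⟩
  obtain ⟨y, hyt, hxy⟩ := Set.mem_iUnion₂.mp (hcov hx)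
  exact ⟨y, hyt, by rw [dynDist_comm]; exact hxy⟩

lemma spanCard_mem (w : List (X → X)) (hw : ∀ f ∈ w, Continuous f) {Z : Set X}
    (hZ : IsCompact Z) {ε : ℝ} (hε : 0 < ε) :
    ∃ F : Finset X, ↑F ⊆ Z ∧ IsDynSpanning w ε Z ↑F ∧ F.card = spanCard Z w ε := by
  have hne : {n | ∃ F : Finset X, ↑F ⊆ Z ∧ IsDynSpanning w ε Z (↑F : Set X) ∧ F.card = n}.Nonempty := by
    obtain ⟨F, h1, h2⟩ := exists_finite_spanning w hw hZ hε
    exact ⟨F.card, F, h1, h2, rfl⟩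
  obtain ⟨F, h1, h2, h3⟩ := Nat.sInf_mem hne
  exact ⟨F, h1, h2, h3⟩

lemma one_le_spanCard (w : List (X → X)) (hw : ∀ f ∈ w, Continuous f) {Z : Set X}
    (hZ : IsCompact Z) (hZne : Z.Nonempty) {ε : ℝ} (hε : 0 < ε) :
    1 ≤ spanCard Z w ε := by
  obtain ⟨F, _, hF2, hF3⟩ := spanCard_mem w hw hZ hε
  obtain ⟨z, hz⟩ := hZne
  obtain ⟨y, hy, -⟩ := hF2 z hz
  rw [← hF3]
  exact Finset.card_pos.mpr ⟨y, hy⟩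

lemma finite_diff [CompactSpace X] {K Z : Set X} (x₀ : X)
    (hacc : {x : X | AccPt x (Filter.principal K)} = {x₀}) (hZ : Z ∈ nhds x₀) :
    (K \ Z).Finite := by
  have hsub : K \ Z ⊆ K \ interior Z := diff_subset_diff_right interior_subset
  refine Set.Finite.subset ?_ hsub
  by_contra hinf
  rw [← Set.Infinite] at hinf
  obtain ⟨x, hx⟩ := hinf.exists_accPt_principal
  have hxK : AccPt x (𝓟 K) := hx.mono (principal_mono.mpr diff_subset)
  have hmem : x ∈ {x : X | AccPt x (𝓟 K)} := hxK
  rw [hacc, Set.mem_singleton_iff] at hmem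
  subst hmem
  have hmemI : interior Z ∈ 𝓝[≠] x := mem_nhdsWithin_of_mem_nhds
    (isOpen_interior.mem_nhds (mem_interior_iff_mem_nhds.mpr hZ))
  haveI hne : (𝓝[≠] x ⊓ 𝓟 (K \ interior Z)).NeBot := hx
  obtain ⟨y, hy1, hy2⟩ := Filter.nonempty_of_mem
    (inter_mem_inf hmemI (mem_principal_self (K \ interior Z)))
  exact hy2.2 hy1

lemma sepCard_le {K Z : Set X} (hfin : (K \ Z).Finite) (w : List (X → X)) {ε : ℝ} (hε : 0 < ε)
    (F : Finset X) (hF : IsDynSpanning w (ε / 2) Z ↑F) :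
    sepCard K w ε ≤ F.card + hfin.toFinset.card := by
  classical
  apply csSup_le
  · exact ⟨0, ∅, by simp [IsDynSeparated]⟩
  rintro n ⟨E, hEK, hEsep, rfl⟩
  rw [← Finset.card_filter_add_card_filter_not (p := fun x => x ∈ Z) (s := E)]
  refine add_le_add ?_ ?_
  · -- injection into F
    have hch : ∀ x : X, ∃ y : X, x ∈ E.filter (fun x => x ∈ Z) → y ∈ F ∧ dynDist w x y < ε / 2 := by
      intro x
      by_cases hx : x ∈ E.filter (fun x => x ∈ Z)
      · obtain ⟨y, hy1, hy2⟩ := hF x (Finset.mem_filter.mp hx).2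
        exact ⟨y, fun _ => ⟨hy1, hy2⟩⟩
      · exact ⟨x, fun h => absurd h hx⟩
    choose φ hφ using hch
    by_contra hcon
    push_neg at hcon
    obtain ⟨a, ha, b, hb, hab, hfab⟩ := Finset.exists_ne_map_eq_of_card_lt_of_maps_to hcon
      (fun x hx => (hφ x hx).1)
    have haE : a ∈ (↑E : Set X) := Finset.mem_coe.mpr (Finset.mem_filter.mp ha).1
    have hbE : b ∈ (↑E : Set X) := Finset.mem_coe.mpr (Finset.mem_filter.mp hb).1
    have hsep := hEsep haE hbE hab
    have h1 := (hφ a ha).2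
    have h2 := (hφ b hb).2
    have htri : dynDist w a b ≤ dynDist w a (φ a) + dynDist w (φ b) b := by
      rw [hfab]
      exact dynDist_triangle w a (φ b) b
    rw [dynDist_comm w (φ b) b] at htri
    linarith
  · apply Finset.card_le_card
    intro x hx
    rw [Set.Finite.mem_toFinset]
    exact ⟨hEK (Finset.mem_coe.mpr (Finset.mem_filter.mp hx).1), (Finset.mem_filter.mp hx).2⟩

lemma sepCard_le_spanCard {K Z : Set X} (hfin : (K \ Z).Finite) (w : List (X → X))
    (hw : ∀ f ∈ w, Continuous f) (hZ : IsCompact Z) {ε : ℝ} (hε : 0 < ε) :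
    sepCard K w ε ≤ spanCard Z w (ε / 2) + hfin.toFinset.card := by
  obtain ⟨F, _, hF2, hF3⟩ := spanCard_mem w hw hZ (by linarith : (0:ℝ) < ε / 2)
  rw [← hF3]
  exact sepCard_le hfin w hε F hF2

lemma mem_map_continuous {n : ℕ} (g : Fin p → X → X) (hg : ∀ i, Continuous (g i))
    (u : Fin n → Fin p) : ∀ f ∈ (List.ofFn u).map g, Continuous f := by
  intro f hf
  obtain ⟨i, -, rfl⟩ := List.mem_map.mp hf
  exact hg i

lemma SepSum_nonneg (g : Fin p → X → X) (K : Set X) (n : ℕ) (ε : ℝ) : 0 ≤ SepSum g K n ε := by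
  unfold SepSum
  positivity

lemma SpanSum_ge_one [NeZero p] (g : Fin p → X → X) (hg : ∀ i, Continuous (g i)) {Z : Set X}
    (hZ : IsCompact Z) (hZne : Z.Nonempty) {ε : ℝ} (hε : 0 < ε) (n : ℕ) :
    1 ≤ SpanSum g Z n ε := by
  have hp : (0:ℝ) < (p:ℝ) ^ n := pow_pos (by exact_mod_cast Nat.pos_of_ne_zero (NeZero.ne p)) n
  rw [SpanSum, one_div, inv_mul_eq_div, le_div_iff₀ hp]
  calc (1:ℝ) * (p:ℝ) ^ n = ∑ _u : Fin n → Fin p, (1:ℝ) := by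
        simp [Finset.card_univ]
    _ ≤ _ := Finset.sum_le_sum fun u _ => by
        exact_mod_cast one_le_spanCard _ (mem_map_continuous g hg u) hZ hZne hε

lemma SepSum_le [NeZero p] (g : Fin p → X → X) (hg : ∀ i, Continuous (g i)) {K Z : Set X}
    (hfin : (K \ Z).Finite) (hZ : IsCompact Z) {ε : ℝ} (hε : 0 < ε) (n : ℕ) :
    SepSum g K n ε ≤ SpanSum g Z n (ε / 2) + hfin.toFinset.card := by
  have hp : (0:ℝ) < (p:ℝ) ^ n := pow_pos (by exact_mod_cast Nat.pos_of_ne_zero (NeZero.ne p)) n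
  rw [SepSum, SpanSum]
  have h1 : ∑ u : Fin n → Fin p, (sepCard K ((List.ofFn u).map g) ε : ℝ)
      ≤ ∑ u : Fin n → Fin p,
        ((spanCard Z ((List.ofFn u).map g) (ε / 2) : ℝ) + (hfin.toFinset.card : ℝ)) :=
    Finset.sum_le_sum fun u _ => by
      exact_mod_cast sepCard_le_spanCard hfin _ (mem_map_continuous g hg u) hZ hε
  have h2 : ∑ u : Fin n → Fin p,
        ((spanCard Z ((List.ofFn u).map g) (ε / 2) : ℝ) + (hfin.toFinset.card : ℝ))
      = (∑ u : Fin n → Fin p, (spanCard Z ((List.ofFn u).map g) (ε / 2) : ℝ))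
        + (p:ℝ) ^ n * (hfin.toFinset.card : ℝ) := by
    rw [Finset.sum_add_distrib, Finset.sum_const, Finset.card_univ]
    simp [nsmul_eq_mul]
  calc (1 / (p:ℝ) ^ n) * ∑ u : Fin n → Fin p, (sepCard K ((List.ofFn u).map g) ε : ℝ)
      ≤ (1 / (p:ℝ) ^ n) * ((∑ u : Fin n → Fin p, (spanCard Z ((List.ofFn u).map g) (ε / 2) : ℝ))
          + (p:ℝ) ^ n * (hfin.toFinset.card : ℝ)) := by
        rw [← h2]; exact mul_le_mul_of_nonneg_left h1 (by positivity)
    _ = _ := by field_simp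

lemma SepRate_le_SpanRate [NeZero p] (g : Fin p → X → X) (hg : ∀ i, Continuous (g i))
    {K Z : Set X} (hfin : (K \ Z).Finite) (hZ : IsCompact Z) (hZne : Z.Nonempty)
    {ε : ℝ} (hε : 0 < ε) :
    SepRate g K ε ≤ SpanRate g Z (ε / 2) := by
  set c : ℝ := (hfin.toFinset.card : ℝ) with hc
  have hc0 : (0:ℝ) ≤ c := Nat.cast_nonneg _
  set L : ℝ := Real.log (1 + c) with hLdef
  have hL0 : 0 ≤ L := Real.log_nonneg (by linarith)
  have key : ∀ n : ℕ, Real.log (SepSum g K n ε) / n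
      ≤ Real.log (SpanSum g Z n (ε / 2)) / n + L / n := by
    intro n
    have h1 := SepSum_le g hg hfin hZ hε n
    have h2 := SpanSum_ge_one g hg hZ hZne (half_pos hε) n
    have hlog : Real.log (SepSum g K n ε) ≤ Real.log (SpanSum g Z n (ε / 2)) + L := by
      rcases eq_or_lt_of_le (SepSum_nonneg g K n ε) with h | h
      · rw [← h, Real.log_zero]
        have := Real.log_nonneg h2
        linarith
      · have hle : SepSum g K n ε ≤ (1 + c) * SpanSum g Z n (ε / 2) := by nlinarith
        calc Real.log (SepSum g K n ε) ≤ Real.log ((1 + c) * SpanSum g Z n (ε / 2)) :=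
              Real.log_le_log h hle
          _ = Real.log (1 + c) + Real.log (SpanSum g Z n (ε / 2)) :=
              Real.log_mul (by linarith) (by linarith)
          _ = _ := by rw [hLdef]; ring
    rcases Nat.eq_zero_or_pos n with rfl | hn
    · simp
    · rw [← add_div]
      gcongr
  have hdten : Tendsto (fun n : ℕ => ((L / n : ℝ) : EReal)) atTop (𝓝 (0 : EReal)) := by
    rw [show ((0:EReal)) = ((0:ℝ) : EReal) by simp]
    exact EReal.tendsto_coe.mpr (tendsto_const_div_atTop_nhds_zero_nat L)
  have hdlim : limsup (fun n : ℕ => ((L / n : ℝ) : EReal)) atTop = 0 := hdten.limsup_eq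
  rw [SepRate, SpanRate]
  calc limsup (fun n : ℕ => ((Real.log (SepSum g K n ε) / n : ℝ) : EReal)) atTop
      ≤ limsup ((fun n : ℕ => ((Real.log (SpanSum g Z n (ε / 2)) / n : ℝ) : EReal))
          + (fun n : ℕ => ((L / n : ℝ) : EReal))) atTop := by
        have hev : (fun n : ℕ => ((Real.log (SepSum g K n ε) / n : ℝ) : EReal))
            ≤ᶠ[atTop] ((fun n : ℕ => ((Real.log (SpanSum g Z n (ε / 2)) / n : ℝ) : EReal))
              + (fun n : ℕ => ((L / n : ℝ) : EReal))) := by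
          apply Filter.Eventually.of_forall
          intro n
          show _ ≤ ((Real.log (SpanSum g Z n (ε / 2)) / n : ℝ) : EReal) + ((L / n : ℝ) : EReal)
          rw [← EReal.coe_add]
          exact EReal.coe_le_coe_iff.mpr (key n)
        exact limsup_le_limsup hev
    _ ≤ limsup (fun n : ℕ => ((Real.log (SpanSum g Z n (ε / 2)) / n : ℝ) : EReal)) atTop
          + limsup (fun n : ℕ => ((L / n : ℝ) : EReal)) atTop :=
        EReal.limsup_add_le (Or.inr (by rw [hdlim]; simp))
          (Or.inr (by rw [hdlim]; simp))
    _ = _ := by rw [hdlim, add_zero]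

/-- if `K` is a countable closed subset whose unique accumulation point is `x₀`,
then `h_top(x₀) ≥ h_top(K, 𝕊)`. -/
theorem entropyFn_ge_of_unique_limit_point [CompactSpace X] {p : ℕ} [NeZero p]
    (g : Fin p → X → X) (hg : ∀ i, Continuous (g i))
    (K : Set X) (hKc : K.Countable) (hK : IsClosed K) (x₀ : X)
    (hacc : {x : X | AccPt x (Filter.principal K)} = {x₀}) :
    semigroupEntropy g K ≤ entropyFn g x₀ := by
  rw [semigroupEntropy, entropyFn]
  refine iSup_le fun εs => ?_
  obtain ⟨ε, hε⟩ := εs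
  refine le_trans ?_ (le_iSup (fun δ : {ε : ℝ // 0 < ε} => hdEps g x₀ (δ : ℝ)) ⟨ε / 2, half_pos hε⟩)
  rw [hdEps]
  refine le_iInf fun Zs => ?_
  obtain ⟨Z, hZn, hZc⟩ := Zs
  exact SepRate_le_SpanRate g hg (finite_diff x₀ hacc hZn) hZc ⟨x₀, mem_of_mem_nhds hZn⟩ hε
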